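/- Let a and b be elements of a sequential effect algebra such that a ∘ b is idempotent. Then a ∘ b ≤ b. If moreover a ∘ b⊥ is also idempotent, then a ∘ b = b ∘ a. -/
import Mathlib


universe u

/-- `EAle orth add a b` : the effect-algebra order `a ≤ b` iff `∃ c, a ⊕ c = b`. -/
def EAle {α : Type u} (orth : α → α → Prop) (add : α → α → α) (a b : α) : Prop :=
  ∃ c, orth a c ∧ add a c = b

/-- An effect algebra: partial sum `add` (defined when `orth` holds), zero, complement. -/
structure EffectAlgebra (α : Type u) where
  orth : α → α → Prop
  add : α → α → α
  zero : α
  compl : α → α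
  orth_comm : ∀ a b, orth a b → orth b a
  add_comm' : ∀ a b, orth a b → add a b = add b a
  orth_zero : ∀ a, orth a zero
  add_zero' : ∀ a, add a zero = a
  orth_assoc₁ : ∀ a b c, orth a b → orth (add a b) c → orth b c
  orth_assoc₂ : ∀ a b c, orth a b → orth (add a b) c → orth a (add b c)
  add_assoc' : ∀ a b c, orth a b → orth (add a b) c → add (add a b) c = add a (add b c)
  orth_compl : ∀ a, orth a (compl a)
  add_compl : ∀ a, add a (compl a) = compl zero
  compl_unique : ∀ a b, orth a b → add a b = compl zero → b = compl a
  orth_one : ∀ a, orth a (compl zero) → a = zero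

namespace EffectAlgebra
variable {α : Type u}
/-- The effect-algebra order. -/
def le (E : EffectAlgebra α) : α → α → Prop := EAle E.orth E.add
/-- The unit `1 := 0⊥`. -/
def one (E : EffectAlgebra α) : α := E.compl E.zero
end EffectAlgebra

/-- A sequential effect algebra: an effect algebra with a total product `seq`
satisfying S1–S5. -/
structure SEA (α : Type u) extends EffectAlgebra α where
  seq : α → α → α
  seq_orth : ∀ a b c, orth b c → orth (seq a b) (seq a c)                                -- S1
  seq_add : ∀ a b c, orth b c → seq a (add b c) = add (seq a b) (seq a c)                -- S1
  one_seq : ∀ a, seq (compl zero) a = a                                                  -- S2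
  seq_zero_symm : ∀ a b, seq a b = zero → seq b a = zero                                 -- S3
  comm_compl : ∀ a b, seq a b = seq b a → seq a (compl b) = seq (compl b) a              -- S4
  comm_assoc : ∀ a b c, seq a b = seq b a → seq a (seq b c) = seq (seq a b) c            -- S4
  comm_seq : ∀ a b c, seq c a = seq a c → seq c b = seq b c →
    seq c (seq a b) = seq (seq a b) c                                                    -- S5
  comm_add : ∀ a b c, seq c a = seq a c → seq c b = seq b c → orth a b →
    seq c (add a b) = seq (add a b) c                                                    -- S5

namespace EffectAlgebra
variable {α : Type u} (E : EffectAlgebra α)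

lemma zero_add'' (a : α) : E.add E.zero a = a := by
  rw [E.add_comm' _ _ (E.orth_comm _ _ (E.orth_zero a)), E.add_zero']

lemma compl_compl' (a : α) : E.compl (E.compl a) = a := by
  have h := E.compl_unique (E.compl a) a (E.orth_comm _ _ (E.orth_compl a))
    (by rw [E.add_comm' _ _ (E.orth_comm _ _ (E.orth_compl a)), E.add_compl])
  exact h.symm

lemma eq_compl_of_add (b t u : α) (h1 : E.orth b t) (h2 : E.add b t = u) :
    b = E.compl (E.add t (E.compl u)) := by
  have hbt : E.orth (E.add b t) (E.compl u) := by rw [h2]; exact E.orth_compl u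
  have h4 : E.orth b (E.add t (E.compl u)) := E.orth_assoc₂ b t _ h1 hbt
  have h5 : E.add b (E.add t (E.compl u)) = E.compl E.zero := by
    rw [← E.add_assoc' b t _ h1 hbt, h2, E.add_compl]
  have h6 := E.compl_unique b _ h4 h5
  rw [h6]
  exact (E.compl_compl' b).symm

lemma cancel (a b c : α) (hab : E.orth a b) (hac : E.orth a c)
    (h : E.add a b = E.add a c) : b = c := by
  have hb := E.eq_compl_of_add b a (E.add a b) (E.orth_comm _ _ hab)
    (E.add_comm' b a (E.orth_comm _ _ hab))
  have hc := E.eq_compl_of_add c a (E.add a c) (E.orth_comm _ _ hac)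
    (E.add_comm' c a (E.orth_comm _ _ hac))
  rw [h] at hb
  exact hb.trans hc.symm

lemma add_eq_zero (x y : α) (hxy : E.orth x y) (h : E.add x y = E.zero) :
    x = E.zero ∧ y = E.zero := by
  have h1 : E.orth (E.add x y) (E.compl E.zero) := by rw [h]; exact E.orth_compl E.zero
  have hy : y = E.zero := E.orth_one y (E.orth_assoc₁ x y _ hxy h1)
  have hx : x = E.zero := by rw [← h, hy, E.add_zero']
  exact ⟨hx, hy⟩

end EffectAlgebra

namespace SEA
variable {α : Type u} (E : SEA α)

lemma seq_zero' (a : α) : E.seq a E.zero = E.zero := by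
  have h := E.seq_add a E.zero E.zero (E.orth_zero E.zero)
  rw [E.add_zero'] at h
  have o := E.seq_orth a E.zero E.zero (E.orth_zero E.zero)
  exact E.toEffectAlgebra.cancel (E.seq a E.zero) (E.seq a E.zero) E.zero o
    (E.orth_zero _) (by rw [E.add_zero']; exact h.symm)

lemma zero_seq' (a : α) : E.seq E.zero a = E.zero :=
  E.seq_zero_symm a E.zero (E.seq_zero' a)

lemma seq_one' (a : α) : E.seq a (E.compl E.zero) = a := by
  rw [E.comm_compl a E.zero (by rw [E.seq_zero', E.zero_seq']), E.one_seq]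

lemma seq_split (a b : α) : E.add (E.seq a b) (E.seq a (E.compl b)) = a := by
  rw [← E.seq_add a b _ (E.orth_compl b), E.add_compl, E.seq_one']

lemma seq_eq_zero_le (x y : α) (h : E.seq x y = E.zero) : E.le x (E.compl y) := by
  have h2 : E.seq y x = E.zero := E.seq_zero_symm x y h
  have hc : E.seq x (E.compl y) = E.seq (E.compl y) x :=
    E.comm_compl x y (by rw [h, h2])
  have hx : E.seq x (E.compl y) = x := by
    have hs := E.seq_split x y
    rwa [h, E.toEffectAlgebra.zero_add''] at hs
  have hyx : E.seq (E.compl y) x = x := by rw [← hc]; exact hx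
  refine ⟨E.seq (E.compl y) (E.compl x), ?_, ?_⟩
  · have := E.seq_orth (E.compl y) x (E.compl x) (E.orth_compl x)
    rwa [hyx] at this
  · have := E.seq_split (E.compl y) x
    rwa [hyx] at this

lemma key (a b : α) (h : E.seq (E.seq a b) (E.seq a b) = E.seq a b) :
    E.seq (E.seq a b) (E.compl b) = E.zero := by
  set p := E.seq a b with hp
  set q := E.seq a (E.compl b) with hq
  have opq : E.orth p q := E.seq_orth a b _ (E.orth_compl b)
  have hpq : E.add p q = a := E.seq_split a b
  have h1 : E.seq p a = E.add p (E.seq p q) := by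
    rw [← hpq, E.seq_add p p q opq, h]
  have h2 : E.add (E.seq p a) (E.seq p (E.compl a)) = p := E.seq_split p a
  have o2 : E.orth (E.seq p a) (E.seq p (E.compl a)) := E.seq_orth p a _ (E.orth_compl a)
  have o2' : E.orth (E.add p (E.seq p q)) (E.seq p (E.compl a)) := by
    rw [← h1]; exact o2
  have oppq : E.orth p (E.seq p q) := by
    have := E.seq_orth p p q opq
    rwa [h] at this
  have h3 : E.add p (E.add (E.seq p q) (E.seq p (E.compl a))) = p := by
    rw [← E.add_assoc' p (E.seq p q) _ oppq o2', ← h1]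
    exact h2
  have o3 : E.orth p (E.add (E.seq p q) (E.seq p (E.compl a))) :=
    E.orth_assoc₂ p _ _ oppq o2'
  have h4 : E.add (E.seq p q) (E.seq p (E.compl a)) = E.zero :=
    E.toEffectAlgebra.cancel p _ E.zero o3 (E.orth_zero p) (by rw [h3, E.add_zero'])
  have opqa : E.orth (E.seq p q) (E.seq p (E.compl a)) :=
    E.orth_assoc₁ p _ _ oppq o2'
  have hpq0 : E.seq p q = E.zero := (E.toEffectAlgebra.add_eq_zero _ _ opqa h4).1
  have hcomm_pq : E.seq p q = E.seq q p := by
    rw [hpq0, E.seq_zero_symm p q hpq0]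
  have hcomm_pa : E.seq p a = E.seq a p := by
    have := E.comm_add p q p rfl hcomm_pq opq
    rwa [hpq] at this
  have hpa : E.seq p a = p := by rw [h1, hpq0, E.add_zero']
  have hassoc := E.comm_assoc p a (E.compl b) hcomm_pa
  rw [← hq, hpa] at hassoc
  rw [← hassoc]
  exact hpq0

end SEA

/-- If `a ∘ b` is idempotent then `a ∘ b ≤ b`; if moreover `a ∘ b⊥` is
idempotent then `a ∘ b = b ∘ a`. -/
theorem sea_seq_idem_le {α : Type u} (E : SEA α) (a b : α)
    (h : E.seq (E.seq a b) (E.seq a b) = E.seq a b) :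
    E.le (E.seq a b) b ∧
    (E.seq (E.seq a (E.compl b)) (E.seq a (E.compl b)) = E.seq a (E.compl b) →
      E.seq a b = E.seq b a) := by
  have k1 : E.seq (E.seq a b) (E.compl b) = E.zero := SEA.key E a b h
  constructor
  · have := E.seq_eq_zero_le (E.seq a b) (E.compl b) k1
    rwa [E.toEffectAlgebra.compl_compl'] at this
  · intro h2
    have k2 := SEA.key E a (E.compl b) h2
    rw [E.toEffectAlgebra.compl_compl'] at k2
    have hbq : E.seq b (E.seq a (E.compl b)) = E.zero := E.seq_zero_symm _ _ k2
    have hbp : E.seq (E.compl b) (E.seq a b) = E.zero := E.seq_zero_symm _ _ k1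
    have hcomm : E.seq (E.seq a b) (E.compl b) = E.seq (E.compl b) (E.seq a b) := by
      rw [k1, hbp]
    have hcommb : E.seq (E.seq a b) b = E.seq b (E.seq a b) := by
      have := E.comm_compl (E.seq a b) (E.compl b) hcomm
      rwa [E.toEffectAlgebra.compl_compl'] at this
    have hpb : E.seq (E.seq a b) b = E.seq a b := by
      have hs := E.seq_split (E.seq a b) b
      rwa [k1, E.add_zero'] at hs
    have e1 : E.seq b a = E.seq b (E.add (E.seq a b) (E.seq a (E.compl b))) := by
      rw [E.seq_split a b]
    have hba : E.seq b a = E.seq a b := by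
      rw [e1, E.seq_add b _ _ (E.seq_orth a b _ (E.orth_compl b)), hbq, E.add_zero',
        ← hcommb, hpb]
    exact hba.symm
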